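/- Fix n ∈ ℕ, p ∈ [1, ∞) and α ∈ ℝ. Then for every h ∈ L_p^0({−1,1}^n) and every S ⊆ [n], ‖E_{[n]∖S} h‖_p ≤ ‖Δ_S^α Δ_{[n]}^{−α} h‖_p. -/

import Mathlib

/-!
Averaging over the coordinates outside `S` keeps exactly the Walsh components `W_A` with
`A ⊆ S`. On such a component with `A ≠ ∅` the multiplier of `Δ_S^α Δ_{[n]}^{-α}` is
`|A|^α |A|^{-α} = 1`, and the component `A = ∅` vanishes because `h` has mean zero. Hence
`E_{[n]∖S} h = E_{[n]∖S} Δ_S^α Δ_{[n]}^{-α} h`, and averaging is a contraction of `L_p`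
by Jensen's inequality.
-/

open Finset

/-- The normalized `L_p` norm of a function on the discrete hypercube `{-1,1}^n`
(coordinates encoded by `Bool`). -/
noncomputable def pnorm {n : ℕ} (p : ℝ) (h : (Fin n → Bool) → ℝ) : ℝ :=
  ((∑ ε : Fin n → Bool, |h ε| ^ p) / 2 ^ n) ^ (1 / p)

/-- The Walsh function `W_A(ε) = Π_{j ∈ A} ε_j`. -/
def walsh {n : ℕ} (A : Finset (Fin n)) (ε : Fin n → Bool) : ℝ :=
  ∏ j ∈ A, (if ε j then (1 : ℝ) else -1)

/-- The Fourier–Walsh coefficient `ĥ(A) = 2^{-n} Σ_ε h(ε) W_A(ε)`. -/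
noncomputable def fourierCoef {n : ℕ} (h : (Fin n → Bool) → ℝ) (A : Finset (Fin n)) : ℝ :=
  (∑ ε : Fin n → Bool, h ε * walsh A ε) / 2 ^ n

/-- `Δ_S^α h = Σ_{A ∩ S ≠ ∅} |A ∩ S|^α ĥ(A) W_A`. -/
noncomputable def deltaPow {n : ℕ} (S : Finset (Fin n)) (α : ℝ) (h : (Fin n → Bool) → ℝ) :
    (Fin n → Bool) → ℝ :=
  fun ε => ∑ A : Finset (Fin n),
    if (A ∩ S).Nonempty then ((A ∩ S).card : ℝ) ^ α * fourierCoef h A * walsh A ε else 0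

/-- `E_S h`: averaging of `h` over the coordinates in `S`. -/
noncomputable def condAvg {n : ℕ} (S : Finset (Fin n)) (h : (Fin n → Bool) → ℝ) :
    (Fin n → Bool) → ℝ :=
  fun ε => (∑ δ : Fin n → Bool, h (fun j => if j ∈ S then δ j else ε j)) / 2 ^ n

section Piecewise

variable {ι β M : Type*} [Fintype ι] [DecidableEq ι] [Fintype β] [AddCommMonoid M]

/-- Exchanging the `T`-coordinates of two points is an involution of the pairs of points. -/
lemma sum_sum_piecewise (T : Finset ι) (G : (ι → β) → M) :
    ∑ ε : ι → β, ∑ δ : ι → β, G (T.piecewise δ ε) =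
      Fintype.card (ι → β) • ∑ σ : ι → β, G σ := by
  have swap : Function.Involutive fun x : (ι → β) × (ι → β) =>
      (T.piecewise x.1 x.2, T.piecewise x.2 x.1) := fun x => by
    simp [piecewise_idem_left, piecewise_idem_right, piecewise_same]
  calc ∑ ε : ι → β, ∑ δ : ι → β, G (T.piecewise δ ε)
      = ∑ x : (ι → β) × (ι → β), G (T.piecewise x.1 x.2) := by
        rw [Fintype.sum_prod_type, sum_comm]
    _ = ∑ x : (ι → β) × (ι → β), G x.1 :=
        Equiv.sum_comp swap.toPerm fun x => G x.1
    _ = Fintype.card (ι → β) • ∑ σ : ι → β, G σ := by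
        simp only [Fintype.sum_prod_type, sum_const, card_univ, smul_sum]

end Piecewise

lemma abs_sum_div_card_rpow_le {ι : Type*} [Fintype ι] [Nonempty ι] (x : ι → ℝ) {p : ℝ}
    (hp : 1 ≤ p) : |(∑ i, x i) / Fintype.card ι| ^ p ≤ (∑ i, |x i| ^ p) / Fintype.card ι := by
  have hcard : (0 : ℝ) < Fintype.card ι := by exact_mod_cast Fintype.card_pos
  have hweights : ∑ _i : ι, (Fintype.card ι : ℝ)⁻¹ = 1 := by
    rw [sum_const, card_univ, nsmul_eq_mul, mul_inv_cancel₀ hcard.ne']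
  calc |(∑ i, x i) / Fintype.card ι| ^ p
      ≤ (∑ i, (Fintype.card ι : ℝ)⁻¹ * |x i|) ^ p := by
        rw [← mul_sum, abs_div, abs_of_pos hcard, div_eq_inv_mul]
        gcongr
        exact abs_sum_le_sum_abs _ _
    _ ≤ ∑ i, (Fintype.card ι : ℝ)⁻¹ * |x i| ^ p :=
        Real.rpow_arith_mean_le_arith_mean_rpow _ _ _ (fun _ _ => by positivity) hweights
          (fun _ _ => abs_nonneg _) hp
    _ = (∑ i, |x i| ^ p) / Fintype.card ι := by rw [← mul_sum, inv_mul_eq_div]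

variable {n : ℕ}

lemma condAvg_apply (T : Finset (Fin n)) (g : (Fin n → Bool) → ℝ) (ε : Fin n → Bool) :
    condAvg T g ε = (∑ δ, g (T.piecewise δ ε)) / 2 ^ n :=
  rfl

lemma card_fun_fin_bool : (Fintype.card (Fin n → Bool) : ℝ) = 2 ^ n := by simp

theorem pnorm_condAvg_le {p : ℝ} (hp : 1 ≤ p) (T : Finset (Fin n)) (g : (Fin n → Bool) → ℝ) :
    pnorm p (condAvg T g) ≤ pnorm p g := by
  have jensen (ε : Fin n → Bool) :
      |condAvg T g ε| ^ p ≤ (∑ δ, |g (T.piecewise δ ε)| ^ p) / 2 ^ n := by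
    simpa only [condAvg_apply, card_fun_fin_bool] using
      abs_sum_div_card_rpow_le (fun δ => g (T.piecewise δ ε)) hp
  have hsum : ∑ ε, |condAvg T g ε| ^ p ≤ ∑ ε, |g ε| ^ p := calc
    _ ≤ ∑ ε, (∑ δ, |g (T.piecewise δ ε)| ^ p) / 2 ^ n := sum_le_sum fun ε _ => jensen ε
    _ = ∑ ε, |g ε| ^ p := by
      rw [← sum_div, sum_sum_piecewise T (fun σ => |g σ| ^ p), nsmul_eq_mul,
        card_fun_fin_bool, mul_div_cancel_left₀ _ (by positivity)]
  unfold pnorm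
  gcongr

lemma walsh_eq_prod_univ (A : Finset (Fin n)) (ε : Fin n → Bool) :
    walsh A ε = ∏ j, if j ∈ A then (if ε j then (1 : ℝ) else -1) else 1 := by
  rw [walsh, prod_ite_mem, univ_inter]

lemma sum_walsh_mul_walsh (A B : Finset (Fin n)) :
    ∑ ε, walsh A ε * walsh B ε = if A = B then 2 ^ n else 0 := by
  let F (j : Fin n) (b : Bool) : ℝ :=
    (if j ∈ A then (if b then 1 else -1) else 1) * (if j ∈ B then (if b then 1 else -1) else 1)
  have factor (j : Fin n) : ∑ b, F j b = if (j ∈ A ↔ j ∈ B) then 2 else 0 := by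
    by_cases hA : j ∈ A <;> by_cases hB : j ∈ B <;> simp [F, hA, hB, one_add_one_eq_two]
  calc ∑ ε, walsh A ε * walsh B ε = ∑ ε : Fin n → Bool, ∏ j, F j (ε j) := by
        simp_rw [walsh_eq_prod_univ, ← prod_mul_distrib]
        rfl
    _ = ∏ j, ∑ b, F j b := (Fintype.prod_sum F).symm
    _ = if A = B then 2 ^ n else 0 := by
        simp_rw [factor, Fintype.prod_ite_zero, ← Finset.ext_iff, prod_const, card_univ,
          Fintype.card_fin]

lemma sum_walsh (A : Finset (Fin n)) : ∑ ε, walsh A ε = if A = ∅ then 2 ^ n else 0 := by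
  simpa [walsh] using sum_walsh_mul_walsh A ∅

lemma sum_subsets_walsh_mul_walsh (δ ε : Fin n → Bool) :
    ∑ A, walsh A δ * walsh A ε = if δ = ε then 2 ^ n else 0 := by
  have factor (j : Fin n) :
      (if δ j then (1 : ℝ) else -1) * (if ε j then (1 : ℝ) else -1) + 1 =
        if δ j = ε j then 2 else 0 := by
    cases δ j <;> cases ε j <;> norm_num
  simp_rw [walsh, ← prod_mul_distrib]
  rw [← powerset_univ, ← prod_add_one]
  simp_rw [factor, Fintype.prod_ite_zero, ← funext_iff, prod_const, card_univ, Fintype.card_fin]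

lemma fourierCoef_empty (h : (Fin n → Bool) → ℝ) : fourierCoef h ∅ = (∑ ε, h ε) / 2 ^ n := by
  simp [fourierCoef, walsh]

def walshSeries (c : Finset (Fin n) → ℝ) (ε : Fin n → Bool) : ℝ :=
  ∑ A, c A * walsh A ε

lemma fourierCoef_walshSeries (c : Finset (Fin n) → ℝ) : fourierCoef (walshSeries c) = c := by
  funext A
  simp only [fourierCoef, walshSeries, sum_mul, mul_assoc]
  rw [sum_comm]
  simp only [← mul_sum, sum_walsh_mul_walsh, mul_ite, mul_zero, sum_ite_eq', mem_univ, if_true]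
  field_simp

lemma walshSeries_fourierCoef (h : (Fin n → Bool) → ℝ) : walshSeries (fourierCoef h) = h := by
  funext ε
  simp only [walshSeries, fourierCoef, div_mul_eq_mul_div, ← sum_div, sum_mul, mul_assoc]
  rw [sum_comm]
  simp only [← mul_sum, sum_subsets_walsh_mul_walsh, mul_ite, mul_zero, sum_ite_eq', mem_univ,
    if_true]
  field_simp

lemma deltaPow_eq_walshSeries (S : Finset (Fin n)) (α : ℝ) (g : (Fin n → Bool) → ℝ) :
    deltaPow S α g = walshSeries fun A =>
      if (A ∩ S).Nonempty then ((A ∩ S).card : ℝ) ^ α * fourierCoef g A else 0 := by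
  funext ε
  simp only [deltaPow, walshSeries, ite_mul, zero_mul]

lemma fourierCoef_deltaPow (S : Finset (Fin n)) (α : ℝ) (g : (Fin n → Bool) → ℝ)
    (A : Finset (Fin n)) :
    fourierCoef (deltaPow S α g) A =
      if (A ∩ S).Nonempty then ((A ∩ S).card : ℝ) ^ α * fourierCoef g A else 0 := by
  rw [deltaPow_eq_walshSeries, fourierCoef_walshSeries]

lemma walsh_piecewise (A T : Finset (Fin n)) (δ ε : Fin n → Bool) :
    walsh A (T.piecewise δ ε) = walsh (A ∩ T) δ * walsh (A \ T) ε := by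
  rw [walsh, ← prod_inter_mul_prod_sdiff A T]
  congr 1
  · exact prod_congr rfl fun j hj => by rw [piecewise_eq_of_mem _ _ _ (mem_inter.1 hj).2]
  · exact prod_congr rfl fun j hj => by rw [piecewise_eq_of_notMem _ _ _ (mem_sdiff.1 hj).2]

lemma condAvg_walsh (T A : Finset (Fin n)) :
    condAvg T (walsh A) = if Disjoint A T then walsh A else 0 := by
  funext ε
  simp only [condAvg_apply, walsh_piecewise, ← sum_mul, sum_walsh, ← disjoint_iff_inter_eq_empty]
  split_ifs with hA
  · rw [sdiff_eq_self_of_disjoint hA]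
    field_simp
  · simp

lemma condAvg_walshSeries (T : Finset (Fin n)) (c : Finset (Fin n) → ℝ) :
    condAvg T (walshSeries c) = walshSeries fun A => if Disjoint A T then c A else 0 := by
  funext ε
  calc condAvg T (walshSeries c) ε = ∑ A, c A * condAvg T (walsh A) ε := by
        simp only [condAvg_apply, walshSeries, mul_sum, sum_div, mul_div_assoc]
        exact sum_comm
    _ = _ := by
        simp only [condAvg_walsh, walshSeries]
        refine sum_congr rfl fun A _ => ?_
        split_ifs <;> simp

lemma condAvg_congr_of_fourierCoef_eq {T : Finset (Fin n)} {f g : (Fin n → Bool) → ℝ}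
    (hfg : ∀ A, Disjoint A T → fourierCoef f A = fourierCoef g A) :
    condAvg T f = condAvg T g := by
  rw [← walshSeries_fourierCoef f, ← walshSeries_fourierCoef g, condAvg_walshSeries,
    condAvg_walshSeries]
  congr 1
  funext A
  split_ifs with hA
  exacts [hfg A hA, rfl]

lemma fourierCoef_deltaPow_deltaPow_univ {h : (Fin n → Bool) → ℝ} (h0 : fourierCoef h ∅ = 0)
    (α : ℝ) {S A : Finset (Fin n)} (hA : A ⊆ S) :
    fourierCoef (deltaPow S α (deltaPow univ (-α) h)) A = fourierCoef h A := by
  rw [fourierCoef_deltaPow, fourierCoef_deltaPow, inter_eq_left.2 hA, inter_univ]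
  rcases A.eq_empty_or_nonempty with rfl | hne
  · simp [h0]
  · rw [if_pos hne, if_pos hne, ← mul_assoc, ← Real.rpow_add (by simpa using hne),
      add_neg_cancel, Real.rpow_zero, one_mul]

/-- **Lemma 3.3**: for `n ∈ ℕ`, `p ∈ [1,∞)`, `α ∈ ℝ`, every mean-zero `h : {-1,1}^n → ℝ` and
`S ⊆ [n]` satisfy `‖E_{[n]∖S} h‖_p ≤ ‖Δ_S^α Δ_{[n]}^{-α} h‖_p`. -/
theorem condAvg_pnorm_le_deltaPow (n : ℕ) (p : ℝ) (hp : 1 ≤ p) (α : ℝ)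
    (h : (Fin n → Bool) → ℝ) (hmean : (∑ ε : Fin n → Bool, h ε) = 0)
    (S : Finset (Fin n)) :
    pnorm p (condAvg Sᶜ h) ≤
      pnorm p (deltaPow S α (deltaPow (univ : Finset (Fin n)) (-α) h)) := by
  have h0 : fourierCoef h ∅ = 0 := by rw [fourierCoef_empty, hmean, zero_div]
  calc pnorm p (condAvg Sᶜ h)
      = pnorm p (condAvg Sᶜ (deltaPow S α (deltaPow univ (-α) h))) := by
        rw [condAvg_congr_of_fourierCoef_eq fun A hA =>
          (fourierCoef_deltaPow_deltaPow_univ h0 α (disjoint_compl_right_iff.1 hA)).symm]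
    _ ≤ _ := pnorm_condAvg_le hp _ _
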